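/- Let C be an n×n complex matrix and B an m×n complex matrix with B*B + C*C = I_n, and let A be the (m+n)×(m+n) block matrix [[0, B],[0, C]]. Define Q_C(x,y) = det( I_n − xC − yC* − xy(I_n − C*C) ) and P_C(x,y) = det( I_n − xC − yC* ). Then for every z ∈ ℂ \ {0} and every θ ∈ ℝ: det( zI_{m+n} − e^{−iθ}A − e^{iθ}A* ) = z^{m+n} · Q_C( e^{−iθ}/z , e^{iθ}/z ), and det( zI_n − e^{−iθ}C − e^{iθ}C* ) = z^{n} · P_C( e^{−iθ}/z , e^{iθ}/z ). -/
import Mathlib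


open Matrix Complex

/-- `P_C(x, y) = det(I - x C - y Cᴴ)`. -/
noncomputable def Pfun {n : ℕ} (C : Matrix (Fin n) (Fin n) ℂ) (x y : ℂ) : ℂ :=
  Matrix.det ((1 : Matrix (Fin n) (Fin n) ℂ) - x • C - y • Cᴴ)

/-- `Q_C(x, y) = det(I - x C - y Cᴴ - x y (I - Cᴴ C))`. -/
noncomputable def Qfun {n : ℕ} (C : Matrix (Fin n) (Fin n) ℂ) (x y : ℂ) : ℂ :=
  Matrix.det ((1 : Matrix (Fin n) (Fin n) ℂ) - x • C - y • Cᴴ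
    - (x * y) • ((1 : Matrix (Fin n) (Fin n) ℂ) - Cᴴ * C))

lemma aux_factor {ι : Type*} [Fintype ι] [DecidableEq ι] (z a b : ℂ) (hz : z ≠ 0)
    (M N : Matrix ι ι ℂ) :
    (z • (1 : Matrix ι ι ℂ) - a • M - b • N).det
      = z ^ Fintype.card ι * ((1 : Matrix ι ι ℂ) - (a / z) • M - (b / z) • N).det := by
  have h1 : z * (a / z) = a := by field_simp
  have h2 : z * (b / z) = b := by field_simp
  have h : z • (1 : Matrix ι ι ℂ) - a • M - b • N
      = z • ((1 : Matrix ι ι ℂ) - (a / z) • M - (b / z) • N) := by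
    rw [smul_sub, smul_sub, smul_smul, smul_smul, h1, h2]
  rw [h, Matrix.det_smul]

lemma aux_block (m n : ℕ) (C : Matrix (Fin n) (Fin n) ℂ) (B : Matrix (Fin m) (Fin n) ℂ)
    (hBC : Bᴴ * B + Cᴴ * C = 1) (x y : ℂ) :
    ((1 : Matrix (Fin m ⊕ Fin n) (Fin m ⊕ Fin n) ℂ)
      - x • Matrix.fromBlocks 0 B 0 C - y • (Matrix.fromBlocks 0 B 0 C)ᴴ).det
      = Qfun C x y := by
  have hb : Bᴴ * B = 1 - Cᴴ * C := eq_sub_of_add_eq hBC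
  have h : (1 : Matrix (Fin m ⊕ Fin n) (Fin m ⊕ Fin n) ℂ)
      - x • Matrix.fromBlocks 0 B 0 C - y • (Matrix.fromBlocks 0 B 0 C)ᴴ
      = Matrix.fromBlocks 1 (-(x • B)) (-(y • Bᴴ)) (1 - x • C - y • Cᴴ) := by
    ext (i | i) (j | j) <;>
      simp [Matrix.fromBlocks, Matrix.one_apply, Matrix.conjTranspose_apply, sub_sub]
  rw [h, Matrix.det_fromBlocks_one₁₁, Qfun]
  congr 1
  rw [Matrix.neg_mul, Matrix.mul_neg, neg_neg, Matrix.smul_mul, Matrix.mul_smul,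
    smul_smul, hb, mul_comm y x]

theorem stmt8 (m n : ℕ) (C : Matrix (Fin n) (Fin n) ℂ) (B : Matrix (Fin m) (Fin n) ℂ)
    (hBC : Bᴴ * B + Cᴴ * C = 1)
    (A : Matrix (Fin m ⊕ Fin n) (Fin m ⊕ Fin n) ℂ)
    (hA : A = Matrix.fromBlocks 0 B 0 C)
    (z : ℂ) (hz : z ≠ 0) (θ : ℝ) :
    Matrix.det (z • (1 : Matrix (Fin m ⊕ Fin n) (Fin m ⊕ Fin n) ℂ)
        - Complex.exp (-(θ : ℂ) * Complex.I) • A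
        - Complex.exp ((θ : ℂ) * Complex.I) • Aᴴ)
      = z ^ (m + n) * Qfun C (Complex.exp (-(θ : ℂ) * Complex.I) / z)
          (Complex.exp ((θ : ℂ) * Complex.I) / z) ∧
    Matrix.det (z • (1 : Matrix (Fin n) (Fin n) ℂ)
        - Complex.exp (-(θ : ℂ) * Complex.I) • C
        - Complex.exp ((θ : ℂ) * Complex.I) • Cᴴ)
      = z ^ n * Pfun C (Complex.exp (-(θ : ℂ) * Complex.I) / z)
          (Complex.exp ((θ : ℂ) * Complex.I) / z) := by
  constructor
  · rw [aux_factor _ _ _ hz, hA, aux_block m n C B hBC]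
    simp [Fintype.card_sum]
  · rw [aux_factor _ _ _ hz]
    simp [Pfun]
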